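/- Let V be a variety of monoids. Every monoid in V is equationally Noetherian (with constants) if and only if V is a variety of abelian groups of exponent dividing some fixed n, i.e., V satisfies the identities xy = yx and x^n = 1 for some n. -/

import Mathlib

/-- Terms of the monoid language with constants from `M`. -/
inductive MTerm (M : Type) (n : ℕ) where
  | var : Fin n → MTerm M n
  | const : M → MTerm M n
  | one : MTerm M n
  | mul : MTerm M n → MTerm M n → MTerm M n

def MTerm.eval {M : Type} [Monoid M] {n : ℕ} (v : Fin n → M) : MTerm M n → M
  | .var i => v i
  | .const m => m
  | .one => 1
  | .mul t s => t.eval v * s.eval v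

def SolSet {M : Type} [Monoid M] {n : ℕ} (S : Set (MTerm M n × MTerm M n)) :
    Set (Fin n → M) :=
  {v | ∀ e ∈ S, e.1.eval v = e.2.eval v}

/-- A monoid is equationally Noetherian if every system of monoid equations with
constants, in finitely many variables, is equivalent to a finite subsystem. -/
def EquationallyNoetherian (M : Type) [Monoid M] : Prop :=
  ∀ (n : ℕ) (S : Set (MTerm M n × MTerm M n)),
    ∃ S' ⊆ S, S'.Finite ∧ SolSet S' = SolSet S

/-!
Non-commutativity and the absence of a bounded exponent are both detected by infinite
independent systems of one-variable equations over a direct power `M^ℕ`: if `ab ≠ ba`,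
the equations `x · δⱼ(b) = δⱼ(b) · x` are solved by `δᵢ(a)` exactly when `j ≠ i`; and a
variety of commutative monoids that are not all groups contains the two-element semilattice
(the image of a non-group under "unit or not"), whose power carries a similar system. If every
member is a group, a product of elements of unbounded order generates a non-group submonoid,
so the exponent is bounded.

Conversely, in an abelian group of exponent `n` an equation in `k` variables is equivalent to
`x^a / x^b = c` with `a, b ∈ (ℤ/n)^k`; two such equations with the same exponents and different
constants are already inconsistent, so one equation per exponent pair suffices.
-/

open Set

theorem not_equationallyNoetherian_of_independent {M : Type} [Monoid M] {k : ℕ}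
    (E : ℕ → MTerm M k × MTerm M k) (w : ℕ → Fin k → M)
    (hw : ∀ i j, (E j).1.eval (w i) = (E j).2.eval (w i) ↔ j ≠ i) :
    ¬ EquationallyNoetherian M := by
  intro hEN
  have hE : E.Injective := fun i j hij => by_contra fun hne =>
    (hw i i).1 (by rw [hij]; exact (hw i j).2 (Ne.symm hne)) rfl
  obtain ⟨S', hS', hfin, hsol⟩ := hEN k (range E)
  obtain ⟨i, hi⟩ := (hfin.preimage hE.injOn).exists_notMem
  have hwi : w i ∈ SolSet S' := by
    intro e he
    obtain ⟨j, rfl⟩ := hS' he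
    exact (hw i j).2 (by rintro rfl; exact hi he)
  rw [hsol] at hwi
  exact (hw i i).1 (hwi (E i) (mem_range_self i)) rfl

theorem not_equationallyNoetherian_pi_of_not_commute {M : Type} [Monoid M] {a b : M}
    (hab : ¬ Commute a b) : ¬ EquationallyNoetherian (ℕ → M) := by
  refine not_equationallyNoetherian_of_independent (k := 1)
    (fun j => (.mul (.var 0) (.const (Pi.mulSingle j b : ℕ → M)),
      .mul (.const (Pi.mulSingle j b : ℕ → M)) (.var 0)))
    (fun i _ => Pi.mulSingle i a) fun i j => ?_
  change Commute (Pi.mulSingle i a : ℕ → M) (Pi.mulSingle j b) ↔ j ≠ i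
  obtain rfl | hji := eq_or_ne j i
  · simpa [Commute, SemiconjBy, ← Pi.mulSingle_mul] using hab
  · simpa [hji] using Pi.mulSingle_commute (f := fun _ : ℕ => M) hji.symm a b

theorem not_equationallyNoetherian_pi_of_nontrivial {M₀ : Type} [MonoidWithZero M₀]
    [Nontrivial M₀] : ¬ EquationallyNoetherian (ℕ → M₀) := by
  refine not_equationallyNoetherian_of_independent (k := 1)
    (fun j => (.mul (.var 0) (.const (Pi.mulSingle j 0)), .var 0))
    (fun i _ => Pi.single i 1) fun i j => ?_
  simp only [MTerm.eval, funext_iff, Pi.mul_apply, Pi.mulSingle_apply, Pi.single_apply]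
  constructor
  · rintro h rfl
    simpa using h j
  · intro h k
    by_cases hk : k = j <;> simp [hk, h]

theorem MulChar.trivial_zmod_two_surjective {M : Type*} [CommMonoid M] {x : M}
    (hx : ¬ IsUnit x) : Function.Surjective (MulChar.trivial M (ZMod 2)) := by
  intro z
  obtain rfl | rfl : z = 0 ∨ z = 1 := by decide +revert
  · exact ⟨x, by simp [hx]⟩
  · exact ⟨1, by simp⟩

theorem exists_pow_eq_one_of_forall_isUnit (V : (M : Type) → Monoid M → Prop)
    (hsub : ∀ (M : Type) [iM : Monoid M], V M iM → ∀ N : Submonoid M, V N inferInstance)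
    (hprod : ∀ (ι : Type) (M : ι → Type) [iM : ∀ i, Monoid (M i)],
      (∀ i, V (M i) (iM i)) → V (∀ i, M i) inferInstance)
    (hunit : ∀ (M : Type) [iM : Monoid M], V M iM → ∀ x : M, IsUnit x) :
    ∃ n, 0 < n ∧ ∀ (M : Type) [iM : Monoid M], V M iM → ∀ x : M, x ^ n = 1 := by
  by_contra! h
  choose M iM hM x hx using fun m => h (m + 1) m.succ_pos
  obtain ⟨⟨_, k, rfl⟩, hk⟩ := (hunit _ (hsub _ (hprod ℕ M hM) (Submonoid.powers x))
    ⟨x, Submonoid.mem_powers x⟩).exists_right_inv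
  apply hx k
  simpa [← pow_succ'] using congrArg (fun p : Submonoid.powers x => (p : ∀ m, M m) k) hk

theorem exists_finite_subset_biInter_fiber_eq {ι X K C : Type*} [Finite K] (g : K → X → C)
    (key : ι → K) (val : ι → C) (S : Set ι) :
    ∃ S' ⊆ S, S'.Finite ∧
      ⋂ e ∈ S', {x | g (key e) x = val e} = ⋂ e ∈ S, {x | g (key e) x = val e} := by
  set p : ι → K × C := fun e => (key e, val e)
  suffices ∃ T ⊆ p '' S, T.Finite ∧
      ⋂ q ∈ T, {x | g q.1 x = q.2} = ⋂ q ∈ p '' S, {x | g q.1 x = q.2} by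
    simpa only [exists_subset_image_finite_and, biInter_image] using this
  by_cases hfun : (p '' S).InjOn Prod.fst
  · exact ⟨p '' S, subset_rfl, Finite.of_finite_image (toFinite _) hfun, rfl⟩
  obtain ⟨q, hq, r, hr, hqr, hne⟩ : ∃ q ∈ p '' S, ∃ r ∈ p '' S, q.1 = r.1 ∧ q ≠ r := by
    simpa [InjOn] using hfun
  have hempty : ⋂ s ∈ ({q, r} : Set (K × C)), {x | g s.1 x = s.2} = ∅ := by
    refine eq_empty_of_forall_notMem fun x hx => hne (Prod.ext hqr ?_)
    simp only [mem_iInter, mem_insert_iff, mem_singleton_iff, mem_ofPred_eq] at hx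
    rw [← hx q (.inl rfl), ← hx r (.inr rfl), hqr]
  refine ⟨{q, r}, pair_subset hq hr, toFinite _, ?_⟩
  rw [hempty, eq_comm, ← subset_empty_iff, ← hempty]
  exact biInter_subset_biInter_left (pair_subset hq hr)

namespace MTerm

variable {M : Type} {k : ℕ}

def varDegree : MTerm M k → Fin k → ℕ
  | var i => Pi.single i 1
  | const _ => 0
  | one => 0
  | mul t s => t.varDegree + s.varDegree

def constPart [Monoid M] : MTerm M k → M
  | var _ => 1
  | const m => m
  | one => 1
  | mul t s => t.constPart * s.constPart

theorem eval_eq_constPart_mul_prod [CommMonoid M] (t : MTerm M k) (v : Fin k → M) :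
    t.eval v = t.constPart * ∏ i, v i ^ t.varDegree i := by
  induction t with
  | var i => simp [eval, varDegree, constPart, Pi.single_apply, pow_ite]
  | const m => simp [eval, varDegree, constPart]
  | one => simp [eval, varDegree, constPart]
  | mul t s iht ihs =>
    simp only [eval, varDegree, constPart, iht, ihs, Pi.add_apply, pow_add,
      Finset.prod_mul_distrib]
    exact mul_mul_mul_comm _ _ _ _

theorem eval_eq_eval_iff_of_pow_eq_one {G : Type} [CommGroup G] {n : ℕ} [NeZero n]
    (hpow : ∀ x : G, x ^ n = 1) (t s : MTerm G k) (v : Fin k → G) :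
    t.eval v = s.eval v ↔
      (∏ i, v i ^ (t.varDegree i : ZMod n).val) / ∏ i, v i ^ (s.varDegree i : ZMod n).val =
        s.constPart / t.constPart := by
  simp only [ZMod.val_natCast, ← pow_eq_pow_mod _ (hpow _), eval_eq_constPart_mul_prod,
    div_eq_div_iff_mul_eq_mul, mul_comm t.constPart]

end MTerm

theorem equationallyNoetherian_of_pow_eq_one {G : Type} [CommGroup G] {n : ℕ} [NeZero n]
    (hpow : ∀ x : G, x ^ n = 1) : EquationallyNoetherian G := by
  intro k S
  let g (κ : (Fin k → ZMod n) × (Fin k → ZMod n)) (v : Fin k → G) : G :=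
    (∏ i, v i ^ (κ.1 i).val) / ∏ i, v i ^ (κ.2 i).val
  have hsol (T : Set (MTerm G k × MTerm G k)) : SolSet T =
      ⋂ e ∈ T, {v | g (fun i => (e.1.varDegree i : ZMod n), fun i => (e.2.varDegree i : ZMod n)) v
        = e.2.constPart / e.1.constPart} := by
    ext v
    simp [SolSet, g, MTerm.eval_eq_eval_iff_of_pow_eq_one hpow]
  simpa only [hsol] using exists_finite_subset_biInter_fiber_eq g _ _ S

/-- For a variety `V` of monoids (a class closed under submonoids, homomorphic images
and arbitrary direct products), every monoid in `V` is equationally Noetherian (with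
constants) iff `V` is a variety of abelian groups of exponent dividing some fixed `n`,
i.e. `V` satisfies the identities `xy = yx` and `x^n = 1` for some `n ≥ 1`. -/
theorem monoid_variety_noetherian_iff_abelian_group_of_finite_exponent
    (V : (M : Type) → Monoid M → Prop)
    (hsub : ∀ (M : Type) [iM : Monoid M], V M iM → ∀ N : Submonoid M, V N inferInstance)
    (hquot : ∀ (M N : Type) [iM : Monoid M] [iN : Monoid N] (f : M →* N),
      Function.Surjective f → V M iM → V N iN)
    (hprod : ∀ (ι : Type) (M : ι → Type) [iM : ∀ i, Monoid (M i)],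
      (∀ i, V (M i) (iM i)) → V (∀ i, M i) inferInstance) :
    (∀ (M : Type) [iM : Monoid M], V M iM → EquationallyNoetherian M) ↔
    (∃ n : ℕ, 0 < n ∧ ∀ (M : Type) [iM : Monoid M], V M iM →
      (∀ x y : M, x * y = y * x) ∧ ∀ x : M, x ^ n = 1) := by
  constructor
  · intro hEN
    have hcomm : ∀ (M : Type) [iM : Monoid M], V M iM → ∀ x y : M, x * y = y * x :=
      fun M _ hM x y => by_contra fun hxy =>
        not_equationallyNoetherian_pi_of_not_commute hxy (hEN _ (hprod ℕ _ fun _ => hM))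
    have hunit : ∀ (M : Type) [iM : Monoid M], V M iM → ∀ x : M, IsUnit x := by
      intro M iM hM x
      by_contra hx
      let : CommMonoid M := { iM with mul_comm := hcomm M hM }
      have hZ : V (ZMod 2) inferInstance :=
        hquot M _ (MulChar.trivial M (ZMod 2)).toMonoidHom
          (MulChar.trivial_zmod_two_surjective hx) hM
      exact not_equationallyNoetherian_pi_of_nontrivial (hEN _ (hprod ℕ _ fun _ => hZ))
    obtain ⟨n, hn, hpow⟩ := exists_pow_eq_one_of_forall_isUnit V hsub hprod hunit
    exact ⟨n, hn, fun M _ hM => ⟨hcomm M hM, hpow M hM⟩⟩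
  · rintro ⟨n, hn, hV⟩ M iM hM
    obtain ⟨hcomm, hpow⟩ := hV M hM
    have : NeZero n := ⟨hn.ne'⟩
    let : CommMonoid M := { iM with mul_comm := hcomm }
    let : CommGroup M := commGroupOfIsUnit fun x => .of_pow_eq_one (hpow x) hn.ne'
    exact equationallyNoetherian_of_pow_eq_one hpow
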